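/- Let M^m be a complete biharmonic hypersurface of constant scalar curvature in S^{m+1} whose mean curvature satisfies H² ≥ (2ε+4)/(m(5m+4)) for some ε > 0. Then Δ|∇H|² ≥ ε|∇H|² pointwise; consequently, if |∇H| is bounded and Ric^M is bounded below, or |∇H| ∈ L^p for some 2 < p < ∞, or |∇H| ∈ L² with Ric^M ≥ −c(1+r²), then H is constant. -/

import Mathlib

/-!
The biharmonic equation `A(∇H) = -(m/2) H ∇H` makes `∇H` a principal direction, so the Gauss
equation evaluates `Ric(∇H, ∇H)`. Constant scalar curvature means `|A|² - m²H²` is constant,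
so `ΔH = H(|A|² - m)` is a cubic polynomial in `H` and `∇ΔH` is a multiple of `∇H`. Bochner's
formula then gives `Δ|∇H|² ≥ 2(-1 + (5/4)m²H² + |A|²)|∇H|²`, and Newton's inequality
`|A|² ≥ mH²` together with the lower bound on `H²` bounds the bracket below by `ε/2`.
Under each of the three hypotheses a maximum principle forces `|∇H|²` to be constant; then
`0 = Δ|∇H|² ≥ ε|∇H|²`, so `∇H = 0`.
-/

noncomputable section

open scoped RealInnerProductSpace BigOperators

/-- Abstract data encoding an isometrically immersed (connected, orientable) hypersurface
`M^m ↪ N^{m+1}`: `V` is a model for the tangent spaces of `M` (an `m`-dimensional real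
inner product space), `A` is the shape operator field, `H` the mean curvature function
(so `trace A = m H`), together with the gradient, Laplace and Hessian operators and the
Ricci curvature of the induced metric, subject to the standard rules of Riemannian
calculus (connectedness of `M` is encoded by `const_of_grad`, and the Bochner formula
holds).  `mixed p X Y` denotes the ambient curvature term `R^N(X, ξ, Y, ξ)` at `p`,
where `ξ` is the chosen unit normal. -/
structure HypersurfaceData (m : ℕ) (M : Type) (V : Type)
    [NormedAddCommGroup V] [InnerProductSpace ℝ V] [FiniteDimensional ℝ V] : Type where
  dimV : Module.finrank ℝ V = m
  /-- the shape operator -/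
  A : M → V →ₗ[ℝ] V
  A_symm : ∀ p (x y : V), ⟪A p x, y⟫ = ⟪x, A p y⟫
  /-- the mean curvature function -/
  H : M → ℝ
  trace_A : ∀ p, LinearMap.trace ℝ V (A p) = m * H p
  /-- the gradient operator of `(M, g)` -/
  grad : (M → ℝ) → M → V
  /-- the Laplace operator of `(M, g)` -/
  lap : (M → ℝ) → M → ℝ
  /-- `hess2 f` is `|∇df|²`, the squared norm of the Hessian of `f` -/
  hess2 : (M → ℝ) → M → ℝ
  /-- the Ricci curvature of `(M, g)` -/
  ricci : M → V → V → ℝ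
  /-- `mixed p X Y = R^N(X, ξ, Y, ξ)` -/
  mixed : M → V → V → ℝ
  grad_add : ∀ f g : M → ℝ, grad (fun p => f p + g p) = fun p => grad f p + grad g p
  grad_mul : ∀ f g : M → ℝ,
    grad (fun p => f p * g p) = fun p => f p • grad g p + g p • grad f p
  grad_const : ∀ c : ℝ, grad (fun _ => c) = fun _ => 0
  lap_const : ∀ c : ℝ, lap (fun _ => c) = fun _ => 0
  const_of_grad : ∀ f : M → ℝ, (∀ p, grad f p = 0) → ∀ p q, f p = f q
  hess2_nonneg : ∀ f p, 0 ≤ hess2 f p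
  hess2_bound : ∀ f p, (lap f p) ^ 2 ≤ m * hess2 f p
  bochner : ∀ (f : M → ℝ) (p : M),
    lap (fun q => ‖grad f q‖ ^ 2) p
      = 2 * (hess2 f p + ricci p (grad f p) (grad f p) + ⟪grad f p, grad (lap f) p⟫)

namespace HypersurfaceData

variable {m : ℕ} {M V : Type} [NormedAddCommGroup V] [InnerProductSpace ℝ V]
  [FiniteDimensional ℝ V] (D : HypersurfaceData m M V)

/-- `|A|²`, the squared norm of the shape operator. -/
def normA2 (p : M) : ℝ := LinearMap.trace ℝ V (D.A p ∘ₗ D.A p)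

/-- The scalar curvature of `M` (trace of the Ricci curvature). -/
def scal (p : M) : ℝ :=
  ∑ i, D.ricci p (stdOrthonormalBasis ℝ V i) (stdOrthonormalBasis ℝ V i)

/-- `M` has constant scalar curvature. -/
def ConstScal : Prop := ∀ p q, D.scal p = D.scal q

/-- `M` is minimal, i.e. `H ≡ 0`. -/
def Minimal : Prop := ∀ p, D.H p = 0

/-- The biharmonic equations for a hypersurface of an Einstein manifold with
`Ric^N = lam·h` :  `ΔH = H(|A|² - lam)` and `A(∇H) + (m/2) H ∇H = 0`. -/
def IsBiharmonic (lam : ℝ) : Prop :=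
  (∀ p, D.lap D.H p = D.H p * (D.normA2 p - lam)) ∧
  (∀ p, D.A p (D.grad D.H p) + ((m : ℝ) / 2 * D.H p) • D.grad D.H p = 0)

/-- The contracted Gauss equation for a hypersurface of a space form of constant
sectional curvature `C`, where `Ric^N(X,Y) = m C ⟨X,Y⟩` and `R^N(X,ξ,Y,ξ) = C ⟨X,Y⟩`
for tangent `X, Y`. -/
def SpaceFormGauss (C : ℝ) : Prop :=
  ∀ p (X Y : V), (m : ℝ) * C * ⟪X, Y⟫
    = D.ricci p X Y + ⟪D.A p X, D.A p Y⟫ - m * D.H p * ⟪D.A p X, Y⟫ + C * ⟪X, Y⟫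

/-- The contracted Gauss equation for a hypersurface of an Einstein manifold with
`Ric^N = lam·h`. -/
def EinsteinAmbientGauss (lam : ℝ) : Prop :=
  ∀ p (X Y : V), lam * ⟪X, Y⟫
    = D.ricci p X Y + ⟪D.A p X, D.A p Y⟫ - m * D.H p * ⟪D.A p X, Y⟫ + D.mixed p X Y

/-- `Ric^N(ξ,ξ) = lam`: the trace over the tangent directions of `R^N(·,ξ,·,ξ)`
equals the ambient Ricci curvature in the normal direction. -/
def MixedTrace (lam : ℝ) : Prop :=
  ∀ p, ∑ i, D.mixed p (stdOrthonormalBasis ℝ V i) (stdOrthonormalBasis ℝ V i) = lam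

end HypersurfaceData

/-- A complete hypersurface: the base data together with the `L^p` classes of functions
and the maximum principles of Yau and Karp–Li type (Theorem MP) valid on complete
Riemannian manifolds. `r` is the distance function from a fixed point. -/
structure CompleteHypersurfaceData (m : ℕ) (M : Type) (V : Type)
    [NormedAddCommGroup V] [InnerProductSpace ℝ V] [FiniteDimensional ℝ V]
    extends HypersurfaceData m M V : Type where
  /-- `MemLp f q` means `f ∈ L^q(M)` -/
  MemLp : (M → ℝ) → ℝ → Prop
  memLp_sq : ∀ (f : M → ℝ) (q : ℝ), MemLp f q → MemLp (fun x => (f x) ^ 2) (q / 2)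
  /-- the distance function from a fixed point of `M` -/
  r : M → ℝ
  /-- maximum principle (i): if `Ric^M` is bounded from below, `f ≥ 0` is bounded from
  above and `Δf ≥ ε f` for some `ε > 0`, then `f` is constant -/
  maxp_bounded : ∀ (f : M → ℝ) (ε : ℝ), 0 < ε → (∀ p, 0 ≤ f p) →
    (∃ B : ℝ, ∀ p, f p ≤ B) →
    (∃ K : ℝ, ∀ p (X : V), K * ‖X‖ ^ 2 ≤ ricci p X X) →
    (∀ p, ε * f p ≤ lap f p) → ∀ p q, f p = f q
  /-- maximum principle (ii): a nonnegative `L^q` (`1 < q < ∞`) subharmonic function is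
  constant -/
  maxp_Lp : ∀ (f : M → ℝ) (q : ℝ), 1 < q → (∀ p, 0 ≤ f p) → MemLp f q →
    (∀ p, 0 ≤ lap f p) → ∀ p p', f p = f p'
  /-- maximum principle (iii): a nonnegative `L¹` subharmonic function is constant,
  provided `Ric^M ≥ -c(1 + r(x)²)` -/
  maxp_L1 : ∀ f : M → ℝ, (∀ p, 0 ≤ f p) → MemLp f 1 → (∀ p, 0 ≤ lap f p) →
    (∃ c : ℝ, 0 < c ∧ ∀ p (X : V), -(c * (1 + r p ^ 2)) * ‖X‖ ^ 2 ≤ ricci p X X) →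
    ∀ p q, f p = f q

namespace LinearMap.IsSymmetric

variable {E ι : Type*} [NormedAddCommGroup E] [InnerProductSpace ℝ E] [Fintype ι]
  {T : E →ₗ[ℝ] E}

lemma trace_comp_self_eq_sum_norm_sq (hT : T.IsSymmetric) (b : OrthonormalBasis ι ℝ E) :
    LinearMap.trace ℝ E (T ∘ₗ T) = ∑ i, ‖T (b i)‖ ^ 2 := by
  rw [LinearMap.trace_eq_sum_inner _ b]
  refine Finset.sum_congr rfl fun i _ => ?_
  rw [LinearMap.comp_apply, ← hT, real_inner_self_eq_norm_sq]

lemma trace_comp_self_nonneg [FiniteDimensional ℝ E] (hT : T.IsSymmetric) :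
    0 ≤ LinearMap.trace ℝ E (T ∘ₗ T) := by
  rw [hT.trace_comp_self_eq_sum_norm_sq (stdOrthonormalBasis ℝ E)]
  positivity

lemma sq_trace_le_finrank_mul_trace_comp_self [FiniteDimensional ℝ E] (hT : T.IsSymmetric) :
    LinearMap.trace ℝ E T ^ 2 ≤ Module.finrank ℝ E * LinearMap.trace ℝ E (T ∘ₗ T) := by
  set b := stdOrthonormalBasis ℝ E
  rw [LinearMap.trace_eq_sum_inner T b, hT.trace_comp_self_eq_sum_norm_sq b]
  calc (∑ i, ⟪b i, T (b i)⟫) ^ 2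
      ≤ Finset.univ.card * ∑ i, ⟪b i, T (b i)⟫ ^ 2 := sq_sum_le_card_mul_sum_sq
    _ ≤ Module.finrank ℝ E * ∑ i, ‖T (b i)‖ ^ 2 := by
      rw [Finset.card_univ, Fintype.card_fin]
      refine mul_le_mul_of_nonneg_left (Finset.sum_le_sum fun i _ => ?_) (Nat.cast_nonneg _)
      calc ⟪b i, T (b i)⟫ ^ 2 ≤ (‖b i‖ * ‖T (b i)‖) ^ 2 := by
            rw [← sq_abs]
            gcongr
            exact abs_real_inner_le_norm _ _
        _ = ‖T (b i)‖ ^ 2 := by rw [b.orthonormal.1 i, one_mul]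

end LinearMap.IsSymmetric

namespace HypersurfaceData

variable {m : ℕ} {M V : Type} [NormedAddCommGroup V] [InnerProductSpace ℝ V]
  [FiniteDimensional ℝ V] (D : HypersurfaceData m M V)

lemma isSymmetric_A (p : M) : (D.A p).IsSymmetric := D.A_symm p

lemma mul_H_sq_le_normA2 (p : M) : (m : ℝ) * D.H p ^ 2 ≤ D.normA2 p := by
  have hnonneg : 0 ≤ D.normA2 p := (D.isSymmetric_A p).trace_comp_self_nonneg
  have hCS : ((m : ℝ) * D.H p) ^ 2 ≤ m * D.normA2 p := by
    have h := (D.isSymmetric_A p).sq_trace_le_finrank_mul_trace_comp_self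
    rwa [D.trace_A, D.dimV] at h
  rcases Nat.eq_zero_or_pos m with rfl | hm
  · simpa using hnonneg
  · have hm' : (0 : ℝ) < m := Nat.cast_pos.2 hm
    nlinarith

lemma scal_eq_of_spaceFormGauss {C : ℝ} (hG : D.SpaceFormGauss C) (p : M) :
    D.scal p = m * (m - 1) * C - D.normA2 p + m ^ 2 * D.H p ^ 2 := by
  set b := stdOrthonormalBasis ℝ V
  have hricci : ∀ i, D.ricci p (b i) (b i)
      = (m - 1) * C - ‖D.A p (b i)‖ ^ 2 + m * D.H p * ⟪b i, D.A p (b i)⟫ := by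
    intro i
    have h := hG p (b i) (b i)
    rw [real_inner_self_eq_norm_sq (D.A p (b i)), D.A_symm, real_inner_self_eq_norm_sq (b i),
      b.orthonormal.1 i] at h
    linarith
  have hA2 : ∑ i, ‖D.A p (b i)‖ ^ 2 = D.normA2 p :=
    ((D.isSymmetric_A p).trace_comp_self_eq_sum_norm_sq b).symm
  have htrA : ∑ i, ⟪b i, D.A p (b i)⟫ = m * D.H p := by
    rw [← LinearMap.trace_eq_sum_inner, D.trace_A]
  rw [scal, Finset.sum_congr rfl fun i _ => hricci i, Finset.sum_add_distrib,
    Finset.sum_sub_distrib, Finset.sum_const, hA2, ← Finset.mul_sum, htrA, Finset.card_univ,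
    Fintype.card_fin, D.dimV, nsmul_eq_mul]
  ring

lemma normA2_sub_eq_of_constScal {C : ℝ} (hG : D.SpaceFormGauss C) (hS : D.ConstScal)
    (p q : M) :
    D.normA2 p - m ^ 2 * D.H p ^ 2 = D.normA2 q - m ^ 2 * D.H q ^ 2 := by
  have hpq := hS p q
  rw [D.scal_eq_of_spaceFormGauss hG, D.scal_eq_of_spaceFormGauss hG] at hpq
  linarith

lemma ricci_eq_of_A_eq_smul {C : ℝ} (hG : D.SpaceFormGauss C) {p : M} {X : V} {k : ℝ}
    (hX : D.A p X = k • X) :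
    D.ricci p X X = ((m - 1) * C - k ^ 2 + m * D.H p * k) * ‖X‖ ^ 2 := by
  have h := hG p X X
  simp only [hX, real_inner_smul_left, real_inner_smul_right] at h
  rw [real_inner_self_eq_norm_sq] at h
  linarith

lemma grad_const_mul (c : ℝ) (f : M → ℝ) :
    D.grad (fun p => c * f p) = fun p => c • D.grad f p := by
  simp [D.grad_mul, D.grad_const]

lemma grad_pow (f : M → ℝ) (n : ℕ) :
    D.grad (fun p => f p ^ (n + 1)) = fun p => ((n + 1) * f p ^ n) • D.grad f p := by
  induction n with
  | zero => simp
  | succ n ih =>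
    simp only [pow_succ _ (n + 1), D.grad_mul, ih]
    funext p
    push_cast
    module

lemma grad_lap_H_eq {C lam : ℝ} (hG : D.SpaceFormGauss C) (hS : D.ConstScal)
    (hB : D.IsBiharmonic lam) (p : M) :
    D.grad (D.lap D.H) p = (2 * m ^ 2 * D.H p ^ 2 + D.normA2 p - lam) • D.grad D.H p := by
  -- constant scalar curvature makes `ΔH` a cubic polynomial in `H`
  set c := D.normA2 p - m ^ 2 * D.H p ^ 2
  have hlap : D.lap D.H = fun q => m ^ 2 * D.H q ^ 3 + (c - lam) * D.H q := by
    funext q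
    rw [hB.1 q, ← sub_add_cancel (D.normA2 q) (m ^ 2 * D.H q ^ 2),
      D.normA2_sub_eq_of_constScal hG hS q p]
    ring
  rw [hlap, D.grad_add, D.grad_const_mul, D.grad_const_mul, D.grad_pow]
  simp only [c]
  module

lemma lap_norm_grad_H_sq_ge {C lam : ℝ} (hG : D.SpaceFormGauss C) (hS : D.ConstScal)
    (hB : D.IsBiharmonic lam) (p : M) :
    2 * ((m - 1) * C - lam + 5 / 4 * m ^ 2 * D.H p ^ 2 + D.normA2 p) * ‖D.grad D.H p‖ ^ 2
      ≤ D.lap (fun q => ‖D.grad D.H q‖ ^ 2) p := by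
  have hA : D.A p (D.grad D.H p) = (-(m / 2 * D.H p)) • D.grad D.H p := by
    rw [neg_smul, eq_neg_iff_add_eq_zero]
    exact hB.2 p
  have hricci := D.ricci_eq_of_A_eq_smul hG hA
  have hinner : ⟪D.grad D.H p, D.grad (D.lap D.H) p⟫
      = (2 * m ^ 2 * D.H p ^ 2 + D.normA2 p - lam) * ‖D.grad D.H p‖ ^ 2 := by
    rw [D.grad_lap_H_eq hG hS hB, real_inner_smul_right, real_inner_self_eq_norm_sq]
  rw [D.bochner, hricci, hinner]
  nlinarith [D.hess2_nonneg D.H p]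

lemma const_of_norm_grad_sq_const {f : M → ℝ} {ε : ℝ} (hε : 0 < ε)
    (hf : ∀ p, ε * ‖D.grad f p‖ ^ 2 ≤ D.lap (fun q => ‖D.grad f q‖ ^ 2) p)
    (hconst : ∀ p q, ‖D.grad f p‖ ^ 2 = ‖D.grad f q‖ ^ 2) (p q : M) : f p = f q := by
  refine D.const_of_grad f (fun x => ?_) p q
  have hlap : D.lap (fun q => ‖D.grad f q‖ ^ 2) x = 0 := by
    rw [show (fun q => ‖D.grad f q‖ ^ 2) = fun _ => ‖D.grad f x‖ ^ 2 from
      funext fun q => hconst q x, D.lap_const]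
  have hx := hf x
  rw [hlap] at hx
  have hzero : ‖D.grad f x‖ ^ 2 = 0 :=
    le_antisymm (nonpos_of_mul_nonpos_right hx hε) (sq_nonneg _)
  simpa using hzero

end HypersurfaceData

namespace CompleteHypersurfaceData

variable {m : ℕ} {M V : Type} [NormedAddCommGroup V] [InnerProductSpace ℝ V]
  [FiniteDimensional ℝ V] (D : CompleteHypersurfaceData m M V)

lemma const_of_lap_norm_grad_sq_ge {f : M → ℝ} {ε : ℝ} (hε : 0 < ε)
    (hf : ∀ p, ε * ‖D.grad f p‖ ^ 2 ≤ D.lap (fun q => ‖D.grad f q‖ ^ 2) p)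
    (hgrowth : ((∃ B : ℝ, ∀ p, ‖D.grad f p‖ ≤ B) ∧
          (∃ K : ℝ, ∀ p (X : V), K * ‖X‖ ^ 2 ≤ D.ricci p X X)) ∨
        (∃ pe : ℝ, 2 < pe ∧ D.MemLp (fun q => ‖D.grad f q‖) pe) ∨
        (D.MemLp (fun q => ‖D.grad f q‖) 2 ∧
          ∃ c : ℝ, 0 < c ∧
            ∀ q (X : V), -(c * (1 + D.r q ^ 2)) * ‖X‖ ^ 2 ≤ D.ricci q X X)) :
    ∀ p q, f p = f q := by
  refine D.const_of_norm_grad_sq_const hε hf ?_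
  have hnonneg : ∀ p, 0 ≤ ‖D.grad f p‖ ^ 2 := fun p => sq_nonneg _
  have hsub : ∀ p, 0 ≤ D.lap (fun q => ‖D.grad f q‖ ^ 2) p :=
    fun p => (mul_nonneg hε.le (hnonneg p)).trans (hf p)
  rcases hgrowth with ⟨⟨B, hB⟩, hRic⟩ | ⟨pe, hpe, hLp⟩ | ⟨hL2, hRic⟩
  · refine D.maxp_bounded _ ε hε hnonneg ⟨B ^ 2, fun p => ?_⟩ hRic hf
    exact pow_le_pow_left₀ (norm_nonneg _) (hB p) 2
  · exact D.maxp_Lp _ (pe / 2) (by linarith) hnonneg (D.memLp_sq _ pe hLp) hsub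
  · have hL1 := D.memLp_sq _ 2 hL2
    rw [div_self two_ne_zero] at hL1
    exact D.maxp_L1 _ hnonneg hL1 hsub hRic

end CompleteHypersurfaceData

/-- **Proposition (complete biharmonic hypersurfaces of constant scalar curvature in
the sphere with large mean curvature).**  Let `M^m` be a complete biharmonic
hypersurface of constant scalar curvature in `S^{m+1}` (ambient Einstein constant `m`,
Gauss equation `SpaceFormGauss 1`) whose mean curvature satisfies
`H² ≥ (2ε+4)/(m(5m+4))` for some `ε > 0`.  Then `Δ|∇H|² ≥ ε|∇H|²` pointwise;
consequently, if (A) `|∇H|` is bounded and `Ric^M` is bounded from below, or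
(B) `|∇H| ∈ L^p` for some `2 < p < ∞`, or (C) `|∇H| ∈ L²` and
`Ric^M ≥ −c(1 + r²)`, then `H` is constant. -/
theorem complete_biharmonic_sphere_large_H_constant {M V : Type}
    [NormedAddCommGroup V] [InnerProductSpace ℝ V] [FiniteDimensional ℝ V]
    {m : ℕ} (hm : 0 < m) (D : CompleteHypersurfaceData m M V) (ε : ℝ) (hε : 0 < ε)
    (hgauss : D.toHypersurfaceData.SpaceFormGauss 1)
    (hscal : D.toHypersurfaceData.ConstScal)
    (hbh : D.toHypersurfaceData.IsBiharmonic m)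
    (hH2 : ∀ p, (2 * ε + 4) / ((m : ℝ) * (5 * (m : ℝ) + 4)) ≤ (D.H p) ^ 2) :
    (∀ p, ε * ‖D.grad D.H p‖ ^ 2 ≤ D.lap (fun q => ‖D.grad D.H q‖ ^ 2) p) ∧
    ((((∃ B : ℝ, ∀ p, ‖D.grad D.H p‖ ≤ B) ∧
          (∃ K : ℝ, ∀ p (X : V), K * ‖X‖ ^ 2 ≤ D.ricci p X X)) ∨
        (∃ pe : ℝ, 2 < pe ∧ D.MemLp (fun q => ‖D.grad D.H q‖) pe) ∨
        (D.MemLp (fun q => ‖D.grad D.H q‖) 2 ∧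
          ∃ c : ℝ, 0 < c ∧
            ∀ q (X : V), -(c * (1 + D.r q ^ 2)) * ‖X‖ ^ 2 ≤ D.ricci q X X)) →
      ∀ p q, D.H p = D.H q) := by
  have hbochner : ∀ p, ε * ‖D.grad D.H p‖ ^ 2 ≤ D.lap (fun q => ‖D.grad D.H q‖ ^ 2) p := by
    intro p
    have hpos : (0 : ℝ) < m * (5 * m + 4) := by positivity
    have hH := (div_le_iff₀ hpos).1 (hH2 p)
    have hnewton := D.mul_H_sq_le_normA2 p
    calc ε * ‖D.grad D.H p‖ ^ 2
        ≤ 2 * ((m - 1) * 1 - m + 5 / 4 * m ^ 2 * D.H p ^ 2 + D.normA2 p)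
            * ‖D.grad D.H p‖ ^ 2 := by
          gcongr
          nlinarith
      _ ≤ D.lap (fun q => ‖D.grad D.H q‖ ^ 2) p := D.lap_norm_grad_H_sq_ge hgauss hscal hbh p
  exact ⟨hbochner, D.const_of_lap_norm_grad_sq_ge hε hbochner⟩
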